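/- First-order unification produces most general unifiers: if two first-order terms t and s are unifiable, then there exists a unifier σ such that every unifier τ of t and s factors as τ = σ followed by some substitution ρ. -/

import Mathlib

/-!
Run the Martelli–Montanari transformations on a finite system of equations: delete `x = x`,
decompose `f(ts) = f(ss)` into the equations between arguments, orient `f(ts) = y` to
`y = f(ts)`, and eliminate `x = s` with `x ∉ s` by substituting `s` for `x` in the other
equations. Each step preserves the set of unifiers (elimination up to composing with `[x ↦ s]`),
and the pair (number of variables, total size) decreases lexicographically. A unifiable system
never meets `x = s` with `x` occurring properly in `s` (compare sizes) nor `f(ts) = g(ss)` with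
`f ≠ g`, so the process ends at the empty system, whose most general unifier is the identity.
-/

open FirstOrder FirstOrder.Language Finset

namespace FirstOrder.Language.Term

variable {L : Language} {α β γ : Type*}

theorem subst_subst (t : L.Term α) (σ : α → L.Term β) (τ : β → L.Term γ) :
    (t.subst σ).subst τ = t.subst fun x => (σ x).subst τ := by
  induction t with
  | var => rfl
  | func f ts ih => simp [ih]

@[simp]
theorem subst_var (t : L.Term α) : t.subst var = t := by
  induction t with
  | var => rfl
  | func f ts ih => simp [ih]

theorem subst_congr [DecidableEq α] {t : L.Term α} {σ τ : α → L.Term β}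
    (h : ∀ x ∈ t.varFinset, σ x = τ x) : t.subst σ = t.subst τ := by
  induction t with
  | var x => simpa using h
  | func f ts ih =>
    simp only [subst, func.injEq, heq_eq_eq, true_and]
    exact funext fun i => ih i fun x hx => h x (mem_biUnion.2 ⟨i, mem_univ i, hx⟩)

theorem mem_varFinset_subst [DecidableEq α] [DecidableEq β] {t : L.Term α}
    {σ : α → L.Term β} {y : β} (hy : y ∈ (t.subst σ).varFinset) :
    ∃ x ∈ t.varFinset, y ∈ (σ x).varFinset := by
  induction t with
  | var x => exact ⟨x, by simpa using hy⟩
  | func f ts ih =>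
    obtain ⟨i, -, hi⟩ := mem_biUnion.1 hy
    obtain ⟨x, hx, hy⟩ := ih i hi
    exact ⟨x, mem_biUnion.2 ⟨i, mem_univ i, hx⟩, hy⟩

theorem varFinset_subst_update_subset [DecidableEq α] (x : α) (s t : L.Term α) :
    (t.subst (Function.update var x s)).varFinset ⊆ s.varFinset ∪ t.varFinset.erase x := by
  intro y hy
  obtain ⟨z, hz, hyz⟩ := mem_varFinset_subst hy
  rcases eq_or_ne z x with rfl | hzx
  · rw [Function.update_self] at hyz
    exact mem_union_left _ hyz
  · rw [Function.update_of_ne hzx, varFinset, mem_singleton] at hyz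
    subst hyz
    exact mem_union_right _ (mem_erase.2 ⟨hzx, hz⟩)

def size : L.Term α → ℕ
  | var _ => 1
  | func _ ts => ∑ i, (ts i).size + 1

theorem size_pos (t : L.Term α) : 0 < t.size := by
  cases t <;> simp [size]

theorem size_lt_size_func {l : ℕ} (f : L.Functions l) (ts : Fin l → L.Term α) (i : Fin l) :
    (ts i).size < (func f ts).size :=
  Nat.lt_succ_of_le (single_le_sum (fun j _ => Nat.zero_le (ts j).size) (mem_univ i))

theorem size_le_size_subst [DecidableEq α] {x : α} {t : L.Term α} (hx : x ∈ t.varFinset)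
    (σ : α → L.Term β) : (σ x).size ≤ (t.subst σ).size := by
  induction t with
  | var y => rw [mem_singleton.1 hx]; rfl
  | func f ts ih =>
    obtain ⟨i, -, hi⟩ := mem_biUnion.1 hx
    exact (ih i hi).trans (size_lt_size_func f (fun j => (ts j).subst σ) i).le

theorem subst_ne_of_mem_varFinset [DecidableEq α] {x : α} {t : L.Term α}
    (hx : x ∈ t.varFinset) (ht : t ≠ var x) (σ : α → L.Term β) : σ x ≠ t.subst σ := by
  cases t with
  | var y => exact absurd (by simpa using hx) ht.symm
  | func f ts =>
    obtain ⟨i, -, hi⟩ := mem_biUnion.1 hx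
    have hlt :=
      (size_le_size_subst hi σ).trans_lt (size_lt_size_func f (fun j => (ts j).subst σ) i)
    exact hlt.ne ∘ congrArg size

end FirstOrder.Language.Term

namespace Unification

open Term

variable {L : Language} {V : Type*}

abbrev Equations (L : Language) (V : Type*) := List (L.Term V × L.Term V)

def unifiers (E : Equations L V) : Set (V → L.Term V) :=
  {σ | ∀ p ∈ E, p.1.subst σ = p.2.subst σ}

def IsMGU (S : Set (V → L.Term V)) (σ : V → L.Term V) : Prop :=
  σ ∈ S ∧ ∀ τ ∈ S, ∃ ρ : V → L.Term V, ∀ x, τ x = (σ x).subst ρ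

def substEqns (σ : V → L.Term V) (E : Equations L V) : Equations L V :=
  E.map fun p => (p.1.subst σ, p.2.subst σ)

def vars [DecidableEq V] : Equations L V → Finset V
  | [] => ∅
  | p :: E => p.1.varFinset ∪ p.2.varFinset ∪ vars E

def size (E : Equations L V) : ℕ :=
  (E.map fun p => p.1.size + p.2.size).sum

theorem unifiers_singleton (t s : L.Term V) :
    unifiers [(t, s)] = {σ | t.subst σ = s.subst σ} := by
  simp [unifiers]

@[simp]
theorem mem_unifiers_cons {σ : V → L.Term V} {p : L.Term V × L.Term V} {E : Equations L V} :
    σ ∈ unifiers (p :: E) ↔ p.1.subst σ = p.2.subst σ ∧ σ ∈ unifiers E :=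
  List.forall_mem_cons

theorem unifiers_cons_swap (t s : L.Term V) (E : Equations L V) :
    unifiers ((t, s) :: E) = unifiers ((s, t) :: E) := by
  ext σ
  simp [eq_comm]

theorem unifiers_cons_self (t : L.Term V) (E : Equations L V) :
    unifiers ((t, t) :: E) = unifiers E := by
  ext σ
  simp

theorem unifiers_cons_func {l : ℕ} (f : L.Functions l) (ts ss : Fin l → L.Term V)
    (E : Equations L V) :
    unifiers ((func f ts, func f ss) :: E) = unifiers (List.ofFn (fun i => (ts i, ss i)) ++ E) := by
  ext σ
  simp [unifiers, funext_iff, or_imp, forall_and]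

theorem mem_unifiers_substEqns {σ τ : V → L.Term V} {E : Equations L V} :
    τ ∈ unifiers (substEqns σ E) ↔ (fun x => (σ x).subst τ) ∈ unifiers E := by
  simp only [unifiers, substEqns, Set.mem_ofPred_eq, List.forall_mem_map, subst_subst]

theorem isMGU_var_nil : IsMGU (unifiers ([] : Equations L V)) var :=
  ⟨List.forall_mem_nil _, fun τ _ => ⟨τ, fun _ => rfl⟩⟩

section Elimination

variable [DecidableEq V] {x : V} {s : L.Term V}

theorem subst_update_eq_self (hx : x ∉ s.varFinset) : s.subst (Function.update var x s) = s := by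
  conv_rhs => rw [← subst_var s]
  exact subst_congr fun y hy => Function.update_of_ne (ne_of_mem_of_not_mem hy hx) _ _

theorem subst_update_subst_eq {τ : V → L.Term V} (hτ : τ x = s.subst τ) :
    (fun y => (Function.update var x s y).subst τ) = τ := by
  funext y
  rcases eq_or_ne y x with rfl | hy
  · simp [hτ]
  · simp [hy]

theorem unifiers_cons_var (E : Equations L V) :
    unifiers ((var x, s) :: E) =
      {τ | τ x = s.subst τ} ∩ unifiers (substEqns (Function.update var x s) E) := by
  ext τ
  simp only [mem_unifiers_cons, Set.mem_inter_iff, Set.mem_ofPred_eq, mem_unifiers_substEqns]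
  exact and_congr_right fun hτ => by rw [subst_update_subst_eq hτ]

theorem IsMGU.cons_var (hx : x ∉ s.varFinset) {E : Equations L V} {σ : V → L.Term V}
    (hσ : IsMGU (unifiers (substEqns (Function.update var x s) E)) σ) :
    IsMGU (unifiers ((var x, s) :: E)) fun y => (Function.update var x s y).subst σ := by
  have hx_eq : (Function.update var x s x).subst σ =
      s.subst fun y => (Function.update var x s y).subst σ := by
    rw [← subst_subst, subst_update_eq_self hx, Function.update_self]
  refine ⟨mem_unifiers_cons.2 ⟨hx_eq, mem_unifiers_substEqns.1 hσ.1⟩, fun τ hτ => ?_⟩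
  rw [unifiers_cons_var] at hτ
  obtain ⟨ρ, hρ⟩ := hσ.2 τ hτ.2
  refine ⟨ρ, fun y => ?_⟩
  rw [← congrFun (subst_update_subst_eq hτ.1) y, subst_subst]
  exact congrArg _ (funext hρ)

end Elimination

theorem size_lt_size_cons (p : L.Term V × L.Term V) (E : Equations L V) :
    size E < size (p :: E) := by
  have := p.1.size_pos
  simp only [size, List.map_cons, List.sum_cons]
  omega

theorem size_ofFn_append_lt {l : ℕ} (f : L.Functions l) (ts ss : Fin l → L.Term V)
    (E : Equations L V) :
    size (List.ofFn (fun i => (ts i, ss i)) ++ E) < size ((func f ts, func f ss) :: E) := by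
  simp only [size, List.map_append, List.map_ofFn, List.sum_append, List.sum_ofFn, List.map_cons,
    List.sum_cons, Function.comp_def, Term.size, sum_add_distrib]
  omega

section Measure

variable [DecidableEq V]

theorem mem_vars {y : V} {E : Equations L V} :
    y ∈ vars E ↔ ∃ p ∈ E, y ∈ p.1.varFinset ∨ y ∈ p.2.varFinset := by
  induction E with
  | nil => simp [vars]
  | cons p E ih => simp [vars, ih, or_assoc]

theorem vars_cons_swap (t s : L.Term V) (E : Equations L V) :
    vars ((t, s) :: E) = vars ((s, t) :: E) := by
  simp only [vars, union_comm t.varFinset]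

theorem vars_subset_vars_cons (p : L.Term V × L.Term V) (E : Equations L V) :
    vars E ⊆ vars (p :: E) :=
  subset_union_right

theorem vars_ofFn_append_subset {l : ℕ} (f : L.Functions l) (ts ss : Fin l → L.Term V)
    (E : Equations L V) :
    vars (List.ofFn (fun i => (ts i, ss i)) ++ E) ⊆ vars ((func f ts, func f ss) :: E) := by
  intro y hy
  simp only [mem_vars, List.mem_append, List.mem_ofFn, List.mem_cons] at hy ⊢
  obtain ⟨p, ⟨i, rfl⟩ | hp, hy⟩ := hy
  · exact ⟨_, Or.inl rfl, hy.imp (fun h => mem_biUnion.2 ⟨i, mem_univ i, h⟩)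
      (fun h => mem_biUnion.2 ⟨i, mem_univ i, h⟩)⟩
  · exact ⟨p, Or.inr hp, hy⟩

theorem vars_substEqns_update_subset (x : V) (s : L.Term V) (E : Equations L V) :
    vars (substEqns (Function.update var x s) E) ⊆ s.varFinset ∪ (vars E).erase x := by
  induction E with
  | nil => exact empty_subset _
  | cons p E ih =>
    have h₁ := varFinset_subst_update_subset x s p.1
    have h₂ := varFinset_subst_update_subset x s p.2
    intro y
    have := @h₁ y; have := @h₂ y; have := @ih y
    simp only [substEqns, List.map_cons, vars, mem_union, mem_erase] at *
    tauto

theorem card_vars_substEqns_lt {x : V} {s : L.Term V} (hx : x ∉ s.varFinset) (E : Equations L V) :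
    (vars (substEqns (Function.update var x s) E)).card < (vars ((var x, s) :: E)).card := by
  have hsub : s.varFinset ∪ (vars E).erase x ⊆ (vars ((var x, s) :: E)).erase x := by
    intro y
    simp only [vars, mem_union, mem_erase]
    rintro (hy | ⟨hyx, hy⟩)
    · exact ⟨ne_of_mem_of_not_mem hy hx, Or.inl (Or.inr hy)⟩
    · exact ⟨hyx, Or.inr hy⟩
  calc (vars (substEqns (Function.update var x s) E)).card
      ≤ ((vars ((var x, s) :: E)).erase x).card :=
        card_le_card ((vars_substEqns_update_subset x s E).trans hsub)
    _ < (vars ((var x, s) :: E)).card :=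
        card_erase_lt_of_mem (mem_union_left _ (mem_union_left _ (mem_singleton_self x)))

theorem lex_lt_of_subset_of_size_lt {E E' : Equations L V} (hv : vars E' ⊆ vars E)
    (hs : size E' < size E) :
    Prod.Lex (· < ·) (· < ·) ((vars E').card, size E') ((vars E).card, size E) :=
  Prod.lex_iff.2 ((card_le_card hv).lt_or_eq.imp id (⟨·, hs⟩))

end Measure

variable [DecidableEq V]

theorem exists_isMGU_cons_var {x : V} {s : L.Term V} {E : Equations L V} (hs : s ≠ var x)
    (h : (unifiers ((var x, s) :: E)).Nonempty)
    (ih : ∀ E' : Equations L V, (vars E').card < (vars ((var x, s) :: E)).card →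
      (unifiers E').Nonempty → ∃ σ, IsMGU (unifiers E') σ) :
    ∃ σ, IsMGU (unifiers ((var x, s) :: E)) σ := by
  obtain ⟨τ, hτ⟩ := h
  have hx : x ∉ s.varFinset := fun hx =>
    subst_ne_of_mem_varFinset hx hs τ (mem_unifiers_cons.1 hτ).1
  rw [unifiers_cons_var] at hτ
  obtain ⟨σ, hσ⟩ := ih _ (card_vars_substEqns_lt hx E) ⟨τ, hτ.2⟩
  exact ⟨_, hσ.cons_var hx⟩

theorem exists_isMGU_cons_func {l m : ℕ} {f : L.Functions l} {g : L.Functions m}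
    {ts : Fin l → L.Term V} {ss : Fin m → L.Term V} {E : Equations L V}
    (h : (unifiers ((func f ts, func g ss) :: E)).Nonempty)
    (ih : ∀ E' : Equations L V, vars E' ⊆ vars ((func f ts, func g ss) :: E) →
      size E' < size ((func f ts, func g ss) :: E) →
      (unifiers E').Nonempty → ∃ σ, IsMGU (unifiers E') σ) :
    ∃ σ, IsMGU (unifiers ((func f ts, func g ss) :: E)) σ := by
  obtain ⟨τ, hτ⟩ := h
  obtain ⟨rfl, hfg, -⟩ := func.inj (mem_unifiers_cons.1 hτ).1
  obtain rfl := eq_of_heq hfg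
  rw [unifiers_cons_func] at hτ ⊢
  exact ih _ (vars_ofFn_append_subset f ts ss E) (size_ofFn_append_lt f ts ss E) ⟨τ, hτ⟩

theorem exists_isMGU (E : Equations L V) (h : (unifiers E).Nonempty) :
    ∃ σ, IsMGU (unifiers E) σ :=
  match E, h with
  | [], _ => ⟨var, isMGU_var_nil⟩
  | (var x, s) :: E, h => by
    by_cases hs : s = var x
    · subst hs
      rw [unifiers_cons_self] at h ⊢
      exact exists_isMGU E h
    · exact exists_isMGU_cons_var hs h fun E' _ h' => exists_isMGU E' h'
  | (func f ts, var y) :: E, h => by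
    rw [unifiers_cons_swap] at h ⊢
    exact exists_isMGU_cons_var (by simp) h fun E' _ h' => exists_isMGU E' h'
  | (func f ts, func g ss) :: E, h =>
    exists_isMGU_cons_func h fun E' _ _ h' => exists_isMGU E' h'
termination_by ((vars E).card, size E)
decreasing_by
  · exact lex_lt_of_subset_of_size_lt (vars_subset_vars_cons _ E) (size_lt_size_cons _ E)
  · exact Prod.Lex.left _ _ ‹_›
  · exact Prod.Lex.left _ _ (vars_cons_swap (var y) (func f ts) E ▸ ‹_›)
  · exact lex_lt_of_subset_of_size_lt ‹_› ‹_›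

end Unification

/-- First-order unification produces most general unifiers: if two first-order
terms `t` and `s` (built from variables in `V` and the function symbols of a
language `L`) are unifiable, then there is a unifier `σ` such that every unifier
`τ` of `t` and `s` factors through `σ`: there is a substitution `ρ` with
`xτ = (xσ)ρ` for every variable `x`. -/
theorem exists_most_general_unifier {L : Language} {V : Type}
    (t s : L.Term V)
    (h : ∃ σ : V → L.Term V, t.subst σ = s.subst σ) :
    ∃ σ : V → L.Term V, t.subst σ = s.subst σ ∧
      ∀ τ : V → L.Term V, t.subst τ = s.subst τ →
        ∃ ρ : V → L.Term V, ∀ x : V, τ x = (σ x).subst ρ := by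
  classical
  obtain ⟨σ, hσ, hmgu⟩ :=
    Unification.exists_isMGU [(t, s)] (by rwa [Unification.unifiers_singleton])
  rw [Unification.unifiers_singleton] at hσ hmgu
  exact ⟨σ, hσ, hmgu⟩
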